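/- arXiv:2102.05901 — 2 statements merged into one kernel-verified Lean document; each statement's English description precedes it below -/
import Mathlib

section
/- Let A, B ⊂ Sⁿ be nonempty with d(A,B) > π/2 (geodesic distance). Then there exists a unit vector v ∈ ℝ^{n+1} and ε > 0 such that ⟨v, a⟩ > ε for all a ∈ A and ⟨v, b⟩ < −ε for all b ∈ B; i.e., A and B lie in complementary open hemispheres and are hence unlinked. -/
open Real
open scoped RealInnerProductSpace

variable {E : Type*} [NormedAddCommGroup E] [InnerProductSpace ℝ E]

/-- Variational inequality at a point of a convex set nearest to `q`. -/
lemma nearest_point_inner_nonneg {C : Set E} (hC : Convex ℝ C) {p q x : E}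
    (hp : p ∈ C) (hx : x ∈ C) (hmin : ∀ y ∈ C, ‖p - q‖ ≤ ‖y - q‖) :
    0 ≤ ⟪p - q, x - p⟫ := by
  by_contra h
  push_neg at h
  have hxp : ‖x - p‖ ≠ 0 := by
    intro h0
    rw [norm_eq_zero, sub_eq_zero] at h0
    subst h0
    simp at h
  have hxp2 : 0 < ‖x - p‖ ^ 2 := by positivity
  set I : ℝ := ⟪p - q, x - p⟫ with hI
  set t : ℝ := min 1 (-I / ‖x - p‖ ^ 2) with ht
  have ht0 : 0 < t := lt_min one_pos (div_pos (by linarith) hxp2)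
  have ht1 : t ≤ 1 := min_le_left _ _
  have hmem : p + t • (x - p) ∈ C := by
    have := hC hp hx (by linarith : (0:ℝ) ≤ 1 - t) ht0.le (by ring)
    convert this using 1
    module
  have hkey := hmin _ hmem
  have hexp : ‖p + t • (x - p) - q‖ ^ 2 = ‖p - q‖ ^ 2 + 2 * t * I + t ^ 2 * ‖x - p‖ ^ 2 := by
    have : p + t • (x - p) - q = (p - q) + t • (x - p) := by abel
    rw [this, norm_add_sq_real, real_inner_smul_right, norm_smul]
    simp [mul_pow, abs_of_pos ht0]
    ring
  have hsq : ‖p - q‖ ^ 2 ≤ ‖p + t • (x - p) - q‖ ^ 2 := by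
    apply pow_le_pow_left₀ (norm_nonneg _) hkey 2
  rw [hexp] at hsq
  have h2 : 0 ≤ 2 * I + t * ‖x - p‖ ^ 2 := by
    nlinarith
  have h3 : t * ‖x - p‖ ^ 2 ≤ -I := by
    have : t ≤ -I / ‖x - p‖ ^ 2 := min_le_right _ _
    calc t * ‖x - p‖ ^ 2 ≤ (-I / ‖x - p‖ ^ 2) * ‖x - p‖ ^ 2 := by
          exact mul_le_mul_of_nonneg_right this hxp2.le
      _ = -I := by field_simp
  linarith

/-- If `A, B ⊂ Sⁿ` are nonempty compact with geodesic distance `> π/2`, then they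
lie in complementary open hemispheres: `⟪v,a⟫ > ε` on `A` and `⟪v,b⟫ < −ε` on `B`. -/
theorem separation_by_hemispheres (n : ℕ)
    (A B : Set (EuclideanSpace ℝ (Fin (n + 1))))
    (hA : A.Nonempty) (hB : B.Nonempty)
    (hAc : IsCompact A) (hBc : IsCompact B)
    (hAsph : ∀ a ∈ A, ‖a‖ = 1) (hBsph : ∀ b ∈ B, ‖b‖ = 1)
    (hd : π / 2 < sInf {d : ℝ | ∃ a ∈ A, ∃ b ∈ B, d = Real.arccos ⟪a, b⟫}) :
    ∃ v : EuclideanSpace ℝ (Fin (n + 1)), ‖v‖ = 1 ∧ ∃ ε > (0 : ℝ),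
      (∀ a ∈ A, ε < ⟪v, a⟫) ∧ (∀ b ∈ B, ⟪v, b⟫ < -ε) := by
  classical
  set S : Set ℝ := {d : ℝ | ∃ a ∈ A, ∃ b ∈ B, d = Real.arccos ⟪a, b⟫} with hS
  -- every pairwise inner product is negative
  have hneg : ∀ a ∈ A, ∀ b ∈ B, ⟪a, b⟫ < 0 := by
    intro a ha b hb
    by_contra h
    push_neg at h
    have hmem : Real.arccos ⟪a, b⟫ ∈ S := ⟨a, ha, b, hb, rfl⟩
    have hbdd : BddBelow S := ⟨0, fun d hd' => by
      obtain ⟨a', _, b', _, rfl⟩ := hd'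
      exact Real.arccos_nonneg _⟩
    have := csInf_le hbdd hmem
    have hle : Real.arccos ⟪a, b⟫ ≤ π / 2 := Real.arccos_le_pi_div_two.2 h
    linarith
  -- maximum of inner product over A × B
  have hprod : IsCompact (A ×ˢ B) := hAc.prod hBc
  have hprodne : (A ×ˢ B).Nonempty := hA.prod hB
  have hcont : ContinuousOn (fun z : EuclideanSpace ℝ (Fin (n+1)) × EuclideanSpace ℝ (Fin (n+1)) => ⟪z.1, z.2⟫) (A ×ˢ B) :=
    (continuous_inner.comp (continuous_fst.prodMk continuous_snd)).continuousOn
  obtain ⟨z, hz, hzmax⟩ := hprod.exists_isMaxOn hprodne hcont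
  set m : ℝ := ⟪z.1, z.2⟫ with hm
  have hmlt : m < 0 := hneg z.1 hz.1 z.2 hz.2
  have hmax : ∀ a ∈ A, ∀ b ∈ B, ⟪a, b⟫ ≤ m := fun a ha b hb =>
    isMaxOn_iff.mp hzmax (a, b) (Set.mk_mem_prod ha hb)
  -- closed convex hulls
  set C : Set (EuclideanSpace ℝ (Fin (n+1))) := closure (convexHull ℝ A) with hCdef
  set D : Set (EuclideanSpace ℝ (Fin (n+1))) := closure (convexHull ℝ B) with hDdef
  have hCconv : Convex ℝ C := (convex_convexHull ℝ A).closure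
  have hDconv : Convex ℝ D := (convex_convexHull ℝ B).closure
  have hCne : C.Nonempty := hA.mono ((subset_convexHull ℝ A).trans subset_closure)
  have hDne : D.Nonempty := hB.mono ((subset_convexHull ℝ B).trans subset_closure)
  have hAsubC : A ⊆ C := (subset_convexHull ℝ A).trans subset_closure
  have hBsubD : B ⊆ D := (subset_convexHull ℝ B).trans subset_closure
  have hCcomp : IsCompact C := by
    apply Metric.isCompact_of_isClosed_isBounded isClosed_closure
    exact (isBounded_convexHull.2 hAc.isBounded).closure
  have hDcomp : IsCompact D := by
    apply Metric.isCompact_of_isClosed_isBounded isClosed_closure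
    exact (isBounded_convexHull.2 hBc.isBounded).closure
  -- the inner product bound extends to the closed convex hulls
  have hhalf : ∀ y : EuclideanSpace ℝ (Fin (n+1)),
      Convex ℝ {x : EuclideanSpace ℝ (Fin (n+1)) | ⟪x, y⟫ ≤ m} := by
    intro y
    exact convex_halfSpace_le ⟨fun a b => inner_add_left a b y,
      fun c x => real_inner_smul_left x y c⟩ m
  have hhalf' : ∀ x : EuclideanSpace ℝ (Fin (n+1)),
      Convex ℝ {y : EuclideanSpace ℝ (Fin (n+1)) | ⟪x, y⟫ ≤ m} := by
    intro x
    exact convex_halfSpace_le ⟨fun a b => inner_add_right x a b,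
      fun c y => real_inner_smul_right x y c⟩ m
  have hclosed : ∀ y : EuclideanSpace ℝ (Fin (n+1)),
      IsClosed {x : EuclideanSpace ℝ (Fin (n+1)) | ⟪x, y⟫ ≤ m} :=
    fun y => isClosed_le (Continuous.inner continuous_id continuous_const) continuous_const
  have hclosed' : ∀ x : EuclideanSpace ℝ (Fin (n+1)),
      IsClosed {y : EuclideanSpace ℝ (Fin (n+1)) | ⟪x, y⟫ ≤ m} :=
    fun x => isClosed_le (Continuous.inner continuous_const continuous_id) continuous_const
  have hstep1 : ∀ x ∈ C, ∀ b ∈ B, ⟪x, b⟫ ≤ m := by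
    intro x hx b hb
    have hsub : C ⊆ {x | ⟪x, b⟫ ≤ m} :=
      closure_minimal (convexHull_min (fun a ha => hmax a ha b hb) (hhalf b)) (hclosed b)
    exact hsub hx
  have hkey : ∀ x ∈ C, ∀ y ∈ D, ⟪x, y⟫ ≤ m := by
    intro x hx y hy
    have hsub : D ⊆ {y | ⟪x, y⟫ ≤ m} :=
      closure_minimal (convexHull_min (fun b hb => hstep1 x hx b hb) (hhalf' x)) (hclosed' x)
    exact hsub hy
  -- minimize distance over C × D
  obtain ⟨w, hw, hwmin⟩ := (hCcomp.prod hDcomp).exists_isMinOn (hCne.prod hDne)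
    ((continuous_fst.sub continuous_snd).norm.continuousOn :
      ContinuousOn (fun z : EuclideanSpace ℝ (Fin (n+1)) × EuclideanSpace ℝ (Fin (n+1)) => ‖z.1 - z.2‖) (C ×ˢ D))
  obtain ⟨p, q⟩ := w
  have hpC : p ∈ C := hw.1
  have hqD : q ∈ D := hw.2
  have hpq : ∀ x ∈ C, ∀ y ∈ D, ‖p - q‖ ≤ ‖x - y‖ := fun x hx y hy =>
    isMinOn_iff.mp hwmin (x, y) (Set.mk_mem_prod hx hy)
  have hpqne : p ≠ q := by
    intro h
    have := hkey p hpC q hqD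
    rw [← h, real_inner_self_eq_norm_sq] at this
    nlinarith [sq_nonneg ‖p‖]
  have hnorm : (0:ℝ) < ‖p - q‖ := by
    rw [norm_pos_iff, sub_ne_zero]; exact hpqne
  -- variational inequalities
  have hvarA : ∀ x ∈ C, 0 ≤ ⟪p - q, x - p⟫ := by
    intro x hx
    exact nearest_point_inner_nonneg hCconv hpC hx (fun y hy => hpq y hy q hqD)
  have hvarB : ∀ y ∈ D, 0 ≤ ⟪q - p, y - q⟫ := by
    intro y hy
    have : ∀ y' ∈ D, ‖q - p‖ ≤ ‖y' - p‖ := by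
      intro y' hy'
      have := hpq p hpC y' hy'
      rwa [norm_sub_rev p q, norm_sub_rev p y'] at this
    exact nearest_point_inner_nonneg hDconv hqD hy this
  -- the separating vector
  refine ⟨(‖p - q‖)⁻¹ • (p - q), ?_, -m / (2 * ‖p - q‖), div_pos (by linarith) (by positivity), ?_, ?_⟩
  · rw [norm_smul, norm_inv, norm_norm, inv_mul_cancel₀ hnorm.ne']
  · intro a ha
    have h1 : 0 ≤ ⟪p - q, a - p⟫ := hvarA a (hAsubC ha)
    have h2 : ⟪p - q, p⟫ = ‖p‖ ^ 2 - ⟪q, p⟫ := by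
      rw [inner_sub_left, real_inner_self_eq_norm_sq]
    have h3 : ⟪q, p⟫ ≤ m := by
      rw [real_inner_comm]; exact hkey p hpC q hqD
    have h4 : ⟪p - q, a⟫ = ⟪p - q, a - p⟫ + ⟪p - q, p⟫ := by
      rw [← inner_add_right]; congr 1; abel
    have h5 : -m ≤ ⟪p - q, a⟫ := by nlinarith [sq_nonneg ‖p‖]
    rw [real_inner_smul_left]
    have hinv : (0:ℝ) < (‖p - q‖)⁻¹ := inv_pos.2 hnorm
    calc -m / (2 * ‖p - q‖) = (-m/2) * (‖p - q‖)⁻¹ := by ring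
      _ < (-m) * (‖p - q‖)⁻¹ := by
          apply mul_lt_mul_of_pos_right _ hinv
          linarith
      _ ≤ ⟪p - q, a⟫ * (‖p - q‖)⁻¹ := mul_le_mul_of_nonneg_right h5 hinv.le
      _ = (‖p - q‖)⁻¹ * ⟪p - q, a⟫ := by ring
  · intro b hb
    have h1 : 0 ≤ ⟪q - p, b - q⟫ := hvarB b (hBsubD hb)
    have h2 : ⟪p - q, q⟫ = ⟪p, q⟫ - ‖q‖ ^ 2 := by
      rw [inner_sub_left, real_inner_self_eq_norm_sq]
    have h3 : ⟪p, q⟫ ≤ m := hkey p hpC q hqD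
    have h4 : ⟪p - q, b⟫ = ⟪p - q, b - q⟫ + ⟪p - q, q⟫ := by
      rw [← inner_add_right]; congr 1; abel
    have h1' : ⟪p - q, b - q⟫ ≤ 0 := by
      have : ⟪p - q, b - q⟫ = -⟪q - p, b - q⟫ := by
        rw [← inner_neg_left]; congr 1; abel
      linarith [this ▸ neg_nonpos_of_nonneg h1]
    have h5 : ⟪p - q, b⟫ ≤ m := by nlinarith [sq_nonneg ‖q‖]
    rw [real_inner_smul_left]
    have hinv : (0:ℝ) < (‖p - q‖)⁻¹ := inv_pos.2 hnorm
    have heq : -(-m / (2 * ‖p - q‖)) = (m / 2) * (‖p - q‖)⁻¹ := by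
      field_simp
    rw [heq]
    calc (‖p - q‖)⁻¹ * ⟪p - q, b⟫ ≤ (‖p - q‖)⁻¹ * m := mul_le_mul_of_nonneg_left h5 hinv.le
      _ = m * (‖p - q‖)⁻¹ := by ring
      _ < (m / 2) * (‖p - q‖)⁻¹ := mul_lt_mul_of_pos_right (by linarith) hinv
end

section
/- The focal radius identity for the Clifford torus: for p = (z₁, z₂) ∈ S³, the distance from p to the Clifford torus T_{Cl} is d(p, T_{Cl}) = |arcsin|z₂| − π/4|. -/
open Real

/-- Auxiliary: for any `z`, there is `w` of modulus `1/√2` with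
`(z * conj w).re = |z| / √2`. -/
lemma exists_aligned (z : ℂ) : ∃ w : ℂ, ‖w‖ = 1 / Real.sqrt 2 ∧
    (z * (starRingEnd ℂ) w).re = ‖z‖ / Real.sqrt 2 := by
  have h2 : (0:ℝ) < Real.sqrt 2 := Real.sqrt_pos.mpr (by norm_num)
  by_cases hz : z = 0
  · refine ⟨((1 / Real.sqrt 2 : ℝ) : ℂ), ?_, ?_⟩
    · rw [Complex.norm_real, Real.norm_eq_abs, abs_of_pos (by positivity)]
    · simp [hz]
  · have hza : (0:ℝ) < ‖z‖ := norm_pos_iff.mpr hz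
    refine ⟨z * ((Real.sqrt 2 * ‖z‖ : ℝ) : ℂ)⁻¹, ?_, ?_⟩
    · rw [norm_mul, norm_inv, Complex.norm_real, Real.norm_eq_abs, abs_of_pos (by positivity)]
      field_simp
    · rw [map_mul, ← mul_assoc]
      rw [show (starRingEnd ℂ) (((Real.sqrt 2 * ‖z‖ : ℝ) : ℂ)⁻¹)
          = ((Real.sqrt 2 * ‖z‖ : ℝ) : ℂ)⁻¹ by
        rw [map_inv₀, Complex.conj_ofReal]]
      rw [Complex.mul_conj]
      have : ((Complex.normSq z : ℝ) : ℂ) * ((Real.sqrt 2 * ‖z‖ : ℝ) : ℂ)⁻¹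
          = (((Complex.normSq z) / (Real.sqrt 2 * ‖z‖) : ℝ) : ℂ) := by
        push_cast; ring
      rw [this, Complex.ofReal_re, Complex.normSq_eq_norm_sq]
      field_simp

/-- For `p = (z₁, z₂) ∈ S³`, the geodesic distance from `p` to the Clifford torus
is `|arcsin |z₂| − π/4|`. -/
theorem dist_to_clifford_torus (z₁ z₂ : ℂ)
    (h : ‖z₁‖ ^ 2 + ‖z₂‖ ^ 2 = 1) :
    sInf {d : ℝ | ∃ w₁ w₂ : ℂ, ‖w₁‖ = 1 / Real.sqrt 2 ∧
        ‖w₂‖ = 1 / Real.sqrt 2 ∧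
        d = Real.arccos ((z₁ * (starRingEnd ℂ) w₁ + z₂ * (starRingEnd ℂ) w₂).re)} =
      |Real.arcsin (‖z₂‖) - π / 4| := by
  set a := ‖z₁‖ with ha_def
  set b := ‖z₂‖ with hb_def
  have ha : 0 ≤ a := norm_nonneg _
  have hb : 0 ≤ b := norm_nonneg _
  have hb1 : b ≤ 1 := by nlinarith
  have h2 : (0:ℝ) < Real.sqrt 2 := Real.sqrt_pos.mpr (by norm_num)
  have hs2 : Real.sqrt 2 ^ 2 = 2 := Real.sq_sqrt (by norm_num)
  have hab : a + b ≤ Real.sqrt 2 := by nlinarith [sq_nonneg (a - b)]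
  have habd : (a + b) / Real.sqrt 2 ≤ 1 := (div_le_one h2).mpr hab
  set θ := Real.arcsin b with hθ_def
  have hθ0 : 0 ≤ θ := Real.arcsin_nonneg.mpr hb
  have hθp : θ ≤ π / 2 := Real.arcsin_le_pi_div_two b
  have hsin : Real.sin θ = b := Real.sin_arcsin (by linarith) hb1
  have hcos : Real.cos θ = a := by
    rw [hθ_def, Real.cos_arcsin, show (1:ℝ) - b ^ 2 = a ^ 2 by linarith,
      Real.sqrt_sq ha]
  -- key identity
  have hcos_eq : (a + b) / Real.sqrt 2 = Real.cos (θ - π / 4) := by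
    rw [Real.cos_sub, Real.cos_pi_div_four, Real.sin_pi_div_four, hsin, hcos]
    rw [div_eq_iff (ne_of_gt h2)]
    nlinarith
  have key : Real.arccos ((a + b) / Real.sqrt 2) = |θ - π / 4| := by
    rw [hcos_eq]
    rcases le_or_gt (π / 4) θ with hc | hc
    · rw [Real.arccos_cos (by linarith) (by linarith [Real.pi_pos]),
        abs_of_nonneg (by linarith)]
    · rw [show θ - π / 4 = -(π / 4 - θ) by ring, Real.cos_neg,
        Real.arccos_cos (by linarith) (by linarith [Real.pi_pos]),
        abs_of_neg (by linarith)]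
      ring
  rw [← key]
  -- the witness
  obtain ⟨w₁, hw₁, hw₁re⟩ := exists_aligned z₁
  obtain ⟨w₂, hw₂, hw₂re⟩ := exists_aligned z₂
  have hmem : Real.arccos ((a + b) / Real.sqrt 2) ∈ {d : ℝ | ∃ w₁ w₂ : ℂ,
      ‖w₁‖ = 1 / Real.sqrt 2 ∧ ‖w₂‖ = 1 / Real.sqrt 2 ∧
      d = Real.arccos ((z₁ * (starRingEnd ℂ) w₁ + z₂ * (starRingEnd ℂ) w₂).re)} := by
    refine ⟨w₁, w₂, hw₁, hw₂, ?_⟩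
    rw [Complex.add_re, hw₁re, hw₂re, ← ha_def, ← hb_def, ← add_div]
  apply le_antisymm
  · exact csInf_le ⟨0, fun d ⟨u₁, u₂, _, _, hd⟩ => hd ▸ Real.arccos_nonneg _⟩ hmem
  · apply le_csInf ⟨_, hmem⟩
    rintro d ⟨u₁, u₂, hu₁, hu₂, rfl⟩
    set X := z₁ * (starRingEnd ℂ) u₁ + z₂ * (starRingEnd ℂ) u₂ with hX
    have hXabs : ‖X‖ ≤ (a + b) / Real.sqrt 2 := by
      calc ‖X‖ ≤ ‖z₁ * (starRingEnd ℂ) u₁‖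
            + ‖z₂ * (starRingEnd ℂ) u₂‖ := norm_add_le _ _
        _ = a * (1 / Real.sqrt 2) + b * (1 / Real.sqrt 2) := by
            rw [norm_mul, norm_mul, Complex.norm_conj, Complex.norm_conj, hu₁, hu₂]
        _ = (a + b) / Real.sqrt 2 := by ring
    have hre_le : X.re ≤ (a + b) / Real.sqrt 2 :=
      le_trans (Complex.re_le_norm X) hXabs
    have hre_ge : (-1 : ℝ) ≤ X.re := by
      have h1 : -‖X‖ ≤ X.re := neg_le_of_abs_le (Complex.abs_re_le_norm X)
      have h3 : (a + b) / Real.sqrt 2 ≤ 1 := habd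
      linarith
    rw [Real.arccos, Real.arccos]
    have := Real.monotone_arcsin hre_le
    linarith
end
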